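/- (Key entropy inequality for the mixture Maxwellians.) Let d ≥ 1, m1, m2 > 0, n1, n2 > 0, T1, T2 > 0, u1, u2 ∈ ℝ^d, 0 < ε ≤ 1, ν21 > 0, ν12 = ε ν21, and let δ, α, γ satisfy ((m1/m2)ε − 1)/(1 + (m1/m2)ε) ≤ δ ≤ 1, 0 ≤ α ≤ 1, 0 ≤ γ ≤ (m1/d)(1−δ)[(1 + (m1/m2)ε) δ + 1 − (m1/m2)ε]. Let M1 = M[n1,u1,T1,m1], M2 = M[n2,u2,T2,m2], M12 = M[n1,u12,T12,m1], M21 = M[n2,u21,T21,m2]. Then ν12 n2 H(M12) + ν21 n1 H(M21) ≤ ν12 n2 H(M1) + ν21 n1 H(M2), where H(f) = ∫_{ℝ^d} f ln f dv. -/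

import Mathlib

open MeasureTheory Real

/-- The Maxwell distribution `M[n,u,T,m]` on `ℝ^d`:
`M(v) = n / (2π T/m)^(d/2) · exp(−|v−u|² / (2T/m))`. -/
noncomputable def maxwellian (d : ℕ) (n : ℝ) (u : EuclideanSpace ℝ (Fin d)) (T m : ℝ)
    (v : EuclideanSpace ℝ (Fin d)) : ℝ :=
  n / (2 * π * T / m) ^ ((d : ℝ) / 2) * Real.exp (-‖v - u‖ ^ 2 / (2 * T / m))

/-- The entropy `H(f) = ∫ f ln f dv` of a function on `ℝ^d`. -/
noncomputable def entropy (d : ℕ) (f : EuclideanSpace ℝ (Fin d) → ℝ) : ℝ :=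
  ∫ v : EuclideanSpace ℝ (Fin d), f v * Real.log (f v)

/-!
A Maxwellian is a rescaled translate of the standard one, and rescaling by `s` shifts the entropy
by `-d log s` times the mass; hence `H(M[n,u,T,m]) = H(M[n,0,1,1]) - (d/2) n log (T/m)`, and the
inequality reduces to `ε log T1 + log T2 ≤ ε log T12 + log T21`. The constraints on `γ` make both
`T12` and `T21` dominate convex combinations of `T1` and `T2`, with weights `(α, 1-α)` and
`(ε(1-α), 1-ε(1-α))`; by concavity of `log`, `ε` times the first estimate plus the second gives
the claim, since the weights on `log T1` and `log T2` add up to `ε` and `1`.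
-/

section Gaussian

variable {V : Type*} [NormedAddCommGroup V] [InnerProductSpace ℝ V] [FiniteDimensional ℝ V]
  [MeasurableSpace V] [BorelSpace V]

theorem integrable_rexp_neg_mul_sq_norm {b : ℝ} (hb : 0 < b) :
    Integrable fun v : V => rexp (-b * ‖v‖ ^ 2) := by
  refine (GaussianFourier.integrable_cexp_neg_mul_sq_norm_add
    (b := (b : ℂ)) (by simpa using hb) 0 (0 : V)).norm.congr (.of_forall fun v => ?_)
  simp [Complex.norm_exp, ← Complex.ofReal_pow]

theorem integrable_sq_norm_mul_rexp_neg_mul_sq_norm {b : ℝ} (hb : 0 < b) :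
    Integrable fun v : V => ‖v‖ ^ 2 * rexp (-b * ‖v‖ ^ 2) := by
  refine ((integrable_rexp_neg_mul_sq_norm (half_pos hb)).const_mul (2 / b)).mono'
    (by fun_prop) (.of_forall fun v => ?_)
  have hsq : ‖v‖ ^ 2 ≤ 2 / b * rexp (b / 2 * ‖v‖ ^ 2) := by
    have := add_one_le_exp (b / 2 * ‖v‖ ^ 2)
    rw [div_mul_eq_mul_div, le_div_iff₀ hb]
    nlinarith
  rw [norm_of_nonneg (by positivity)]
  calc ‖v‖ ^ 2 * rexp (-b * ‖v‖ ^ 2)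
      ≤ 2 / b * rexp (b / 2 * ‖v‖ ^ 2) * rexp (-b * ‖v‖ ^ 2) := by gcongr
    _ = 2 / b * rexp (-(b / 2) * ‖v‖ ^ 2) := by rw [mul_assoc, ← exp_add]; ring_nf

end Gaussian

section Entropy

variable {d : ℕ}

theorem mul_log_inv_pow_mul (x s : ℝ) (hs : 0 < s) :
    (s ^ d)⁻¹ * x * log ((s ^ d)⁻¹ * x) = (s ^ d)⁻¹ * (x * log x - d * log s * x) := by
  rcases eq_or_ne x 0 with rfl | hx
  · simp
  rw [log_mul (by positivity) hx, log_inv, log_pow]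
  ring

theorem entropy_rescale (f : EuclideanSpace ℝ (Fin d) → ℝ) (hf : Integrable f)
    (hf_log : Integrable fun v => f v * log (f v)) (u : EuclideanSpace ℝ (Fin d)) {s : ℝ}
    (hs : 0 < s) :
    entropy d (fun v => (s ^ d)⁻¹ * f (s⁻¹ • (v - u)))
      = entropy d f - d * log s * ∫ v, f v := by
  have change_of_variables : ∀ g : EuclideanSpace ℝ (Fin d) → ℝ,
      ∫ v, (s ^ d)⁻¹ * g (s⁻¹ • (v - u)) = ∫ v, g v := by
    intro g
    rw [integral_const_mul, integral_sub_right_eq_self (fun v => g (s⁻¹ • v)),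
      Measure.integral_comp_inv_smul_of_nonneg _ _ hs.le, finrank_euclideanSpace_fin,
      smul_eq_mul, inv_mul_cancel_left₀ (by positivity)]
  unfold entropy
  simp_rw [mul_log_inv_pow_mul _ _ hs]
  rw [change_of_variables (fun w => f w * log (f w) - d * log s * f w),
    integral_sub hf_log (hf.const_mul _), integral_const_mul]

theorem maxwellian_zero_one_one (n : ℝ) :
    maxwellian d n 0 1 1 = fun w => n / (2 * π) ^ ((d : ℝ) / 2) * rexp (-(1 / 2) * ‖w‖ ^ 2) := by
  ext w
  simp only [maxwellian, sub_zero, mul_one, div_one]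
  ring_nf

theorem maxwellian_eq_rescale (n : ℝ) {T m : ℝ} (hT : 0 < T) (hm : 0 < m)
    (u v : EuclideanSpace ℝ (Fin d)) :
    maxwellian d n u T m v
      = (√(T / m) ^ d)⁻¹ * maxwellian d n 0 1 1 ((√(T / m))⁻¹ • (v - u)) := by
  have hθ : 0 < T / m := div_pos hT hm
  set s := √(T / m)
  have hs : 0 < s := sqrt_pos.2 hθ
  have hs_sq : s ^ 2 = T / m := sq_sqrt hθ.le
  have h_norm : ‖s⁻¹ • (v - u)‖ ^ 2 = ‖v - u‖ ^ 2 / s ^ 2 := by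
    rw [norm_smul, norm_inv, norm_of_nonneg hs.le]
    field_simp
  have h_pow : (2 * π * T / m) ^ ((d : ℝ) / 2) = (2 * π) ^ ((d : ℝ) / 2) * s ^ d := by
    rw [mul_div_assoc, ← hs_sq, mul_rpow (by positivity) (by positivity), ← rpow_natCast,
      ← rpow_natCast s, ← rpow_mul hs.le]
    push_cast
    ring_nf
  simp only [maxwellian, sub_zero, h_norm, h_pow, mul_div_assoc (2 : ℝ), ← hs_sq]
  field_simp

theorem integrable_maxwellian_zero_one_one (n : ℝ) : Integrable (maxwellian d n 0 1 1) := by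
  rw [maxwellian_zero_one_one]
  exact (integrable_rexp_neg_mul_sq_norm (by norm_num)).const_mul _

theorem integrable_maxwellian_zero_one_one_mul_log (n : ℝ) :
    Integrable fun w => maxwellian d n 0 1 1 w * log (maxwellian d n 0 1 1 w) := by
  rw [maxwellian_zero_one_one]
  set c := n / (2 * π) ^ ((d : ℝ) / 2)
  have h_log : ∀ x : ℝ, c * rexp (-(1 / 2) * x) * log (c * rexp (-(1 / 2) * x))
      = c * log c * rexp (-(1 / 2) * x) + -(c / 2) * (x * rexp (-(1 / 2) * x)) := by
    intro x
    rcases eq_or_ne c 0 with hc | hc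
    · simp [hc]
    rw [log_mul hc (exp_pos _).ne', log_exp]
    ring
  simp_rw [h_log]
  exact ((integrable_rexp_neg_mul_sq_norm (by norm_num)).const_mul _).add
    ((integrable_sq_norm_mul_rexp_neg_mul_sq_norm (by norm_num)).const_mul _)

theorem integral_maxwellian_zero_one_one (n : ℝ) :
    ∫ w, maxwellian d n 0 1 1 w = n := by
  rw [maxwellian_zero_one_one, integral_const_mul,
    GaussianFourier.integral_rexp_neg_mul_sq_norm (by norm_num), finrank_euclideanSpace_fin]
  rw [show π / (1 / 2) = 2 * π by ring]
  field_simp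

theorem entropy_maxwellian (n : ℝ) {T m : ℝ} (hT : 0 < T) (hm : 0 < m)
    (u : EuclideanSpace ℝ (Fin d)) :
    entropy d (maxwellian d n u T m)
      = entropy d (maxwellian d n 0 1 1) - (d / 2) * n * log (T / m) := by
  rw [funext (maxwellian_eq_rescale n hT hm u), entropy_rescale _
    (integrable_maxwellian_zero_one_one n) (integrable_maxwellian_zero_one_one_mul_log n) u
    (sqrt_pos.2 (div_pos hT hm)), integral_maxwellian_zero_one_one, log_sqrt (div_pos hT hm).le]
  ring

end Entropy

theorem convex_combination_pos {a x y : ℝ} (ha : a ∈ Set.Icc (0 : ℝ) 1) (hx : 0 < x)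
    (hy : 0 < y) : 0 < a * x + (1 - a) * y := by
  simpa using convex_Ioi (0 : ℝ) hx hy ha.1 (sub_nonneg.2 ha.2) (add_sub_cancel a 1)

theorem mul_log_add_log_le_of_mixture_le {T₁ T₂ T₁₂ T₂₁ α ε : ℝ} (hT₁ : 0 < T₁) (hT₂ : 0 < T₂)
    (hα : α ∈ Set.Icc (0 : ℝ) 1) (hε : ε ∈ Set.Icc (0 : ℝ) 1)
    (h₁₂ : α * T₁ + (1 - α) * T₂ ≤ T₁₂)
    (h₂₁ : ε * (1 - α) * T₁ + (1 - ε * (1 - α)) * T₂ ≤ T₂₁) :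
    ε * log T₁ + log T₂ ≤ ε * log T₁₂ + log T₂₁ := by
  have log_mixture_le : ∀ a ∈ Set.Icc (0 : ℝ) 1, ∀ T, a * T₁ + (1 - a) * T₂ ≤ T →
      a * log T₁ + (1 - a) * log T₂ ≤ log T := fun a ha T hT =>
    (strictConcaveOn_log_Ioi.concaveOn.2 hT₁ hT₂ ha.1 (sub_nonneg.2 ha.2) (by ring)).trans
      (log_le_log (convex_combination_pos ha hT₁ hT₂) hT)
  have hβ := unitInterval.mul_mem hε (Set.Icc.mem_iff_one_sub_mem.1 hα)
  have hε₀ : 0 ≤ ε := hε.1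
  linear_combination ε * log_mixture_le α hα T₁₂ h₁₂ + log_mixture_le _ hβ T₂₁ h₂₁

theorem bgk_mixture_maxwellian_entropy_inequality_general
    (d : ℕ)
    (m1 m2 : ℝ) (hm1 : 0 < m1) (hm2 : 0 < m2)
    (n1 n2 : ℝ) (hn1 : 0 < n1) (hn2 : 0 < n2)
    (T1 T2 : ℝ) (hT1 : 0 < T1) (hT2 : 0 < T2)
    (u1 u2 : EuclideanSpace ℝ (Fin d))
    (ε : ℝ) (hε0 : 0 < ε) (hε1 : ε ≤ 1)
    (ν21 : ℝ) (hν21 : 0 < ν21) (ν12 : ℝ) (hν12 : ν12 = ε * ν21)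
    (δ α γ : ℝ)
    (hα0 : 0 ≤ α) (hα1 : α ≤ 1)
    (hγ0 : 0 ≤ γ)
    (hγhigh : γ ≤ (m1 / d) * (1 - δ) * ((1 + (m1 / m2) * ε) * δ + 1 - (m1 / m2) * ε))
    (u12 : EuclideanSpace ℝ (Fin d))
    (u21 : EuclideanSpace ℝ (Fin d))
    (T12 : ℝ) (hT12 : T12 = α * T1 + (1 - α) * T2 + γ * ‖u1 - u2‖ ^ 2)
    (T21 : ℝ)
    (hT21 : T21 = ((1 / d) * ε * m1 * (1 - δ) * ((m1 / m2) * ε * (δ - 1) + δ + 1) - ε * γ)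
        * ‖u1 - u2‖ ^ 2 + ε * (1 - α) * T1 + (1 - ε * (1 - α)) * T2) :
    ν12 * n2 * entropy d (maxwellian d n1 u12 T12 m1)
        + ν21 * n1 * entropy d (maxwellian d n2 u21 T21 m2)
      ≤ ν12 * n2 * entropy d (maxwellian d n1 u1 T1 m1)
        + ν21 * n1 * entropy d (maxwellian d n2 u2 T2 m2) := by
  have h₁₂ : α * T1 + (1 - α) * T2 ≤ T12 := by
    rw [hT12]
    exact le_add_of_nonneg_right (by positivity)
  have h₂₁ : ε * (1 - α) * T1 + (1 - ε * (1 - α)) * T2 ≤ T21 := by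
    have h_coeff : 0 ≤ (1 / d) * ε * m1 * (1 - δ) * ((m1 / m2) * ε * (δ - 1) + δ + 1) - ε * γ := by
      linear_combination ε * hγhigh
    rw [hT21]
    linarith [mul_nonneg h_coeff (sq_nonneg ‖u1 - u2‖)]
  have hα : α ∈ Set.Icc (0 : ℝ) 1 := ⟨hα0, hα1⟩
  have hε : ε ∈ Set.Icc (0 : ℝ) 1 := ⟨hε0.le, hε1⟩
  have hβ := unitInterval.mul_mem hε (Set.Icc.mem_iff_one_sub_mem.1 hα)
  have hT12_pos : 0 < T12 := (convex_combination_pos hα hT1 hT2).trans_le h₁₂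
  have hT21_pos : 0 < T21 := (convex_combination_pos hβ hT1 hT2).trans_le h₂₁
  have h_log := mul_log_add_log_le_of_mixture_le hT1 hT2 hα hε h₁₂ h₂₁
  rw [entropy_maxwellian n1 hT12_pos hm1, entropy_maxwellian n2 hT21_pos hm2,
    entropy_maxwellian n1 hT1 hm1, entropy_maxwellian n2 hT2 hm2,
    log_div hT12_pos.ne' hm1.ne', log_div hT21_pos.ne' hm2.ne',
    log_div hT1.ne' hm1.ne', log_div hT2.ne' hm2.ne', hν12]
  linear_combination ((d / 2 : ℝ) * ν21 * n1 * n2) * h_log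

/-- Key entropy inequality for the mixture Maxwellians:
`ν12 n2 H(M12) + ν21 n1 H(M21) ≤ ν12 n2 H(M1) + ν21 n1 H(M2)`. -/
theorem bgk_mixture_maxwellian_entropy_inequality
    (d : ℕ) (hd : 1 ≤ d)
    (m1 m2 : ℝ) (hm1 : 0 < m1) (hm2 : 0 < m2)
    (n1 n2 : ℝ) (hn1 : 0 < n1) (hn2 : 0 < n2)
    (T1 T2 : ℝ) (hT1 : 0 < T1) (hT2 : 0 < T2)
    (u1 u2 : EuclideanSpace ℝ (Fin d))
    (ε : ℝ) (hε0 : 0 < ε) (hε1 : ε ≤ 1)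
    (ν21 : ℝ) (hν21 : 0 < ν21) (ν12 : ℝ) (hν12 : ν12 = ε * ν21)
    (δ α γ : ℝ)
    (hδlow : ((m1 / m2) * ε - 1) / (1 + (m1 / m2) * ε) ≤ δ) (hδhigh : δ ≤ 1)
    (hα0 : 0 ≤ α) (hα1 : α ≤ 1)
    (hγ0 : 0 ≤ γ)
    (hγhigh : γ ≤ (m1 / d) * (1 - δ) * ((1 + (m1 / m2) * ε) * δ + 1 - (m1 / m2) * ε))
    (u12 : EuclideanSpace ℝ (Fin d)) (hu12 : u12 = δ • u1 + (1 - δ) • u2)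
    (u21 : EuclideanSpace ℝ (Fin d))
    (hu21 : u21 = u2 - ((m1 / m2) * ε * (1 - δ)) • (u2 - u1))
    (T12 : ℝ) (hT12 : T12 = α * T1 + (1 - α) * T2 + γ * ‖u1 - u2‖ ^ 2)
    (T21 : ℝ)
    (hT21 : T21 = ((1 / d) * ε * m1 * (1 - δ) * ((m1 / m2) * ε * (δ - 1) + δ + 1) - ε * γ)
        * ‖u1 - u2‖ ^ 2 + ε * (1 - α) * T1 + (1 - ε * (1 - α)) * T2) :
    ν12 * n2 * entropy d (maxwellian d n1 u12 T12 m1)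
        + ν21 * n1 * entropy d (maxwellian d n2 u21 T21 m2)
      ≤ ν12 * n2 * entropy d (maxwellian d n1 u1 T1 m1)
        + ν21 * n1 * entropy d (maxwellian d n2 u2 T2 m2) :=
  bgk_mixture_maxwellian_entropy_inequality_general d m1 m2 hm1 hm2 n1 n2 hn1 hn2 T1 T2 hT1 hT2 u1
    u2 ε hε0 hε1 ν21 hν21 ν12 hν12 δ α γ hα0 hα1 hγ0 hγhigh u12 u21 T12 hT12 T21 hT21
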